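/- Let m ≥ 1 be an integer and let f ∈ X₁ be such that f(x) = 0 for m-a.e. x ∈ Ω₁ with τ₊(x) > m. Then U₁(t)f = 0 for every t > m. Consequently, the set of such functions (over all m ≥ 1) is a dense subspace of X₁ on which the semigroup (U₁(t))_{t≥0} is locally quasinilpotent, i.e. lim_{t→∞} exp( t^{−1} log ‖U₁(t)|f|‖ ) = 0 for every such f. -/

import Mathlib

open MeasureTheory Filter
open scoped ENNReal NNReal Topology

noncomputable section

/-- Abbreviation for the Euclidean space `ℝ^N`. -/
abbrev Euc (N : ℕ) : Type := EuclideanSpace ℝ (Fin N)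

/-- The backward exit time `τ₋(x)` from `Ω` along the flow `Φ`, with values in `[0,∞]`
(`sInf ∅ = ∞`). -/
def tauMinus {N : ℕ} (Ω : Set (Euc N)) (Φ : Euc N → ℝ → Euc N) (x : Euc N) : ℝ≥0∞ :=
  sInf {r : ℝ≥0∞ | ∃ s : ℝ, 0 < s ∧ r = ENNReal.ofReal s ∧ Φ x (-s) ∉ Ω}

/-- The forward exit time `τ₊(x)` from `Ω` along the flow `Φ`. -/
def tauPlus {N : ℕ} (Ω : Set (Euc N)) (Φ : Euc N → ℝ → Euc N) (x : Euc N) : ℝ≥0∞ :=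
  sInf {r : ℝ≥0∞ | ∃ s : ℝ, 0 < s ∧ r = ENNReal.ofReal s ∧ Φ x s ∉ Ω}

/-- The divergence of a vector field on `ℝ^N`. -/
def diverg {N : ℕ} (F : Euc N → Euc N) (x : Euc N) : ℝ :=
  ∑ i, (fderiv ℝ F x (EuclideanSpace.single i 1) : Fin N → ℝ) i

/-! If `t < τ₋(x)`, the point `y = Φ(x,-t)` stays in `Ω` for forward times up to `t`, so
`τ₊(y) ≥ t > m` and `U₁(t)f(x)` is a multiple of `f(y) = 0`. The points `x` where this fails lie
in the image of a null set under `Φ(·,t)`, which is Lipschitz by Grönwall and so preserves null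
sets. For density, `{τ₊ > m}` is relatively open in `Ω` (Grönwall and compactness of
`Φ(x,[0,a])`), and since `τ₊ < ∞` on `Ω₁`, dominated convergence gives `f·1_{τ₊ ≤ m} → f` in
`Lᵖ`. Quasinilpotence is immediate, as `U₁(t)|f| = 0` for large `t`. -/

theorem LipschitzOnWith.volume_image_le {V : Type*} [NormedAddCommGroup V]
    [InnerProductSpace ℝ V] [FiniteDimensional ℝ V] [MeasurableSpace V] [BorelSpace V]
    {K : ℝ≥0} {f : V → V} {s : Set V} (hf : LipschitzOnWith K f s) :
    volume (f '' s) ≤ (K : ℝ≥0∞) ^ Module.finrank ℝ V * volume s := by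
  rw [← InnerProductSpace.euclideanHausdorffMeasure_eq_volume,
    Measure.euclideanHausdorffMeasure_def, Measure.smul_apply, Measure.smul_apply,
    ENNReal.smul_def, ENNReal.smul_def, smul_eq_mul, smul_eq_mul, mul_left_comm,
    ← ENNReal.rpow_natCast]
  gcongr
  exact hf.hausdorffMeasure_image_le (Nat.cast_nonneg _)

section LpTruncation

variable {α E : Type*} [MeasurableSpace α] {μ : Measure α} [NormedAddCommGroup E]
  {p : ℝ≥0∞} {s : ℕ → Set α}

theorem tendsto_eLpNorm_indicator_of_eventually_notMem (hp : p ≠ ∞) {f : α → E}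
    (hf : MemLp f p μ) (hs : ∀ n, MeasurableSet (s n)) (hlim : ∀ᵐ x ∂μ, ∀ᶠ n in atTop, x ∉ s n) :
    Tendsto (fun n => eLpNorm ((s n).indicator f) p μ) atTop (𝓝 0) := by
  obtain rfl | hp0 := eq_or_ne p 0
  · simp
  have hp_pos : 0 < p.toReal := ENNReal.toReal_pos hp0 hp
  have hlintegral : Tendsto (fun n => ∫⁻ x, ‖(s n).indicator f x‖ₑ ^ p.toReal ∂μ) atTop
      (𝓝 (∫⁻ _, 0 ∂μ)) := by
    refine tendsto_lintegral_of_dominated_convergence' (fun x => ‖f x‖ₑ ^ p.toReal)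
      (fun n => ((hf.1.indicator (hs n)).enorm.pow_const _)) (fun n => ?_)
      (lintegral_rpow_enorm_lt_top_of_eLpNorm_lt_top hp0 hp hf.2).ne ?_
    · refine .of_forall fun x => ?_
      exact ENNReal.rpow_le_rpow (enorm_indicator_le_enorm_self ..) hp_pos.le
    · filter_upwards [hlim] with x hx
      refine tendsto_const_nhds.congr' ?_
      filter_upwards [hx] with n hn
      simp [hn, ENNReal.zero_rpow_of_pos hp_pos]
  have := hlintegral.ennrpow_const (1 / p.toReal)
  rw [lintegral_zero, ENNReal.zero_rpow_of_pos (by positivity)] at this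
  simpa only [eLpNorm_eq_lintegral_rpow_enorm_toReal hp0 hp] using this

theorem Lp.dense_setOf_ae_eq_zero_on [Fact (1 ≤ p)] (hp : p ≠ ∞)
    (hs : ∀ n, MeasurableSet (s n)) (hlim : ∀ᵐ x ∂μ, ∀ᶠ n in atTop, x ∉ s n) :
    Dense {f : Lp E p μ | ∃ n, ∀ᵐ x ∂μ, x ∈ s n → f x = 0} := by
  intro f
  have hmem n : MemLp ((s n)ᶜ.indicator f) p μ := (Lp.memLp f).indicator (hs n).compl
  refine mem_closure_of_tendsto (b := atTop) (f := fun n => (hmem n).toLp) ?_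
    (.of_forall fun n => ?_)
  · rw [Lp.tendsto_Lp_iff_tendsto_eLpNorm']
    refine (tendsto_eLpNorm_indicator_of_eventually_notMem hp (Lp.memLp f) hs hlim).congr
      fun n => ?_
    rw [← eLpNorm_neg]
    refine eLpNorm_congr_ae ?_
    filter_upwards [(hmem n).coeFn_toLp] with x hx
    rw [Pi.sub_apply, hx, Set.indicator_compl, Pi.sub_apply, sub_sub_cancel_left, Pi.neg_apply]
  · refine ⟨n, ?_⟩
    filter_upwards [(hmem n).coeFn_toLp] with x hx hxs
    rw [hx, Set.indicator_of_notMem (Set.notMem_compl_iff.2 hxs)]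

end LpTruncation

structure IsFlowOf {E : Type*} [NormedAddCommGroup E] [NormedSpace ℝ E] (F : E → E)
    (Φ : E → ℝ → E) : Prop where
  zero : ∀ x, Φ x 0 = x
  hasDerivAt : ∀ x t, HasDerivAt (Φ x) (F (Φ x t)) t

namespace IsFlowOf

variable {E : Type*} [NormedAddCommGroup E] [NormedSpace ℝ E] {F : E → E} {Φ : E → ℝ → E}
  {κ : ℝ≥0}

theorem continuous (hΦ : IsFlowOf F Φ) (x : E) : Continuous (Φ x) :=
  continuous_iff_continuousAt.2 fun t => (hΦ.hasDerivAt x t).continuousAt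

theorem add (hΦ : IsFlowOf F Φ) (hF : LipschitzWith κ F) (x : E) (a : ℝ) {s : ℝ} (hs : 0 ≤ s) :
    Φ x (a + s) = Φ (Φ x a) s := by
  refine ODE_solution_unique (v := fun _ => F) (fun _ => hF)
    ((hΦ.continuous x).comp (continuous_const_add a)).continuousOn
    (fun r _ => ((hΦ.hasDerivAt x (a + r)).comp_const_add a r).hasDerivWithinAt)
    (hΦ.continuous _).continuousOn
    (fun r _ => (hΦ.hasDerivAt _ r).hasDerivWithinAt) (by simp [hΦ.zero])
    (Set.right_mem_Icc.2 hs)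

theorem dist_le (hΦ : IsFlowOf F Φ) (hF : LipschitzWith κ F) (x y : E) {t : ℝ} (ht : 0 ≤ t) :
    dist (Φ x t) (Φ y t) ≤ dist x y * Real.exp (κ * t) := by
  simpa using dist_le_of_trajectories_ODE (v := fun _ => F) (fun _ => hF)
    (hΦ.continuous x).continuousOn (fun r _ => (hΦ.hasDerivAt x r).hasDerivWithinAt)
    (hΦ.continuous y).continuousOn (fun r _ => (hΦ.hasDerivAt y r).hasDerivWithinAt)
    (by rw [hΦ.zero, hΦ.zero]) t (Set.right_mem_Icc.2 ht)

theorem lipschitzWith (hΦ : IsFlowOf F Φ) (hF : LipschitzWith κ F) {t : ℝ} (ht : 0 ≤ t) :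
    LipschitzWith (Real.exp (κ * t)).toNNReal (Φ · t) :=
  .of_dist_le_mul fun x y => by
    rw [Real.coe_toNNReal _ (Real.exp_pos _).le, mul_comm]
    exact hΦ.dist_le hF x y ht

theorem isOpen_setOf_forall_mem (hΦ : IsFlowOf F Φ) (hF : LipschitzWith κ F) {Ω : Set E}
    (hΩ : IsOpen Ω) (a : ℝ) : IsOpen {x | ∀ s ∈ Set.Icc 0 a, Φ x s ∈ Ω} := by
  refine Metric.isOpen_iff.2 fun x₀ hx₀ => ?_
  obtain ⟨δ, hδ, hthick⟩ := (isCompact_Icc.image (hΦ.continuous x₀)).exists_thickening_subset_open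
    hΩ (Set.image_subset_iff.2 hx₀)
  refine ⟨δ / Real.exp (κ * a), by positivity, fun x hx s hs => hthick ?_⟩
  refine Metric.mem_thickening_iff.2 ⟨Φ x₀ s, Set.mem_image_of_mem _ hs, ?_⟩
  calc dist (Φ x s) (Φ x₀ s) ≤ dist x x₀ * Real.exp (κ * s) := hΦ.dist_le hF x x₀ hs.1
    _ ≤ dist x x₀ * Real.exp (κ * a) := by gcongr; exact hs.2
    _ < δ := (lt_div_iff₀ (Real.exp_pos _)).1 (Metric.mem_ball.1 hx)

end IsFlowOf

section ExitTime

variable {N : ℕ} {Ω : Set (Euc N)} {Φ : Euc N → ℝ → Euc N} {x : Euc N}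

theorem ofReal_le_tauPlus_iff {a : ℝ} :
    ENNReal.ofReal a ≤ tauPlus Ω Φ x ↔ ∀ s, 0 < s → s < a → Φ x s ∈ Ω := by
  refine le_sInf_iff.trans ⟨fun h s hs hsa => by_contra fun hsΩ => ?_, ?_⟩
  · exact (h _ ⟨s, hs, rfl, hsΩ⟩ |> (ENNReal.ofReal_le_ofReal_iff hs.le).1 |>.not_gt) hsa
  · rintro h _ ⟨s, hs, rfl, hsΩ⟩
    exact ENNReal.ofReal_le_ofReal (not_lt.1 fun hsa => hsΩ (h s hs hsa))

theorem mem_of_lt_tauPlus {t s : ℝ} (ht : ENNReal.ofReal t < tauPlus Ω Φ x) (hs : 0 < s)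
    (hst : s ≤ t) : Φ x s ∈ Ω := by
  obtain ⟨a, -, hta, haτ⟩ := ENNReal.lt_iff_exists_real_btwn.1 ht
  exact ofReal_le_tauPlus_iff.1 haτ.le s hs
    (hst.trans_lt ((ENNReal.ofReal_lt_ofReal_iff_of_nonneg (hs.le.trans hst)).1 hta))

theorem tauPlus_lt_top_iff : tauPlus Ω Φ x < ∞ ↔ ∃ s, 0 < s ∧ Φ x s ∉ Ω := by
  refine ⟨fun h => ?_, fun ⟨s, hs, hsΩ⟩ => ?_⟩
  · by_contra! hall
    refine h.ne (ENNReal.eq_top_of_forall_nnreal_le fun r => ?_)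
    simpa using ofReal_le_tauPlus_iff (a := r).2 fun s hs _ => hall s hs
  · exact (show tauPlus Ω Φ x ≤ ENNReal.ofReal s from sInf_le ⟨s, hs, rfl, hsΩ⟩).trans_lt
      ENNReal.ofReal_lt_top

-- `τ₋` is `τ₊` of the time-reversed flow, definitionally.
theorem mem_of_lt_tauMinus {t s : ℝ} (ht : ENNReal.ofReal t < tauMinus Ω Φ x) (hs : 0 < s)
    (hst : s ≤ t) : Φ x (-s) ∈ Ω :=
  mem_of_lt_tauPlus (Φ := fun y s => Φ y (-s)) ht hs hst

end ExitTime

section FlowExitTime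

variable {N : ℕ} {Ω : Set (Euc N)} {F : Euc N → Euc N} {κ : ℝ≥0} {Φ : Euc N → ℝ → Euc N}

theorem isOpen_setOf_lt_tauPlus (hΦ : IsFlowOf F Φ) (hF : LipschitzWith κ F) (hΩ : IsOpen Ω)
    {b : ℝ} (hb : 0 ≤ b) : IsOpen {x ∈ Ω | ENNReal.ofReal b < tauPlus Ω Φ x} := by
  suffices {x ∈ Ω | ENNReal.ofReal b < tauPlus Ω Φ x} =
      ⋃ a > b, {x | ∀ s ∈ Set.Icc 0 a, Φ x s ∈ Ω} from
    this ▸ isOpen_biUnion fun a _ => hΦ.isOpen_setOf_forall_mem hF hΩ a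
  ext x
  simp only [Set.mem_ofPred_eq, Set.mem_iUnion, exists_prop]
  constructor
  · rintro ⟨hx, hbτ⟩
    obtain ⟨a, -, hba, haτ⟩ := ENNReal.lt_iff_exists_real_btwn.1 hbτ
    have hba' : b < a := (ENNReal.ofReal_lt_ofReal_iff'.1 hba).1
    refine ⟨(b + a) / 2, by linarith, fun s hs => ?_⟩
    rcases hs.1.eq_or_lt with rfl | hs0
    · rwa [hΦ.zero]
    · exact mem_of_lt_tauPlus haτ hs0 (by linarith [hs.2])
  · rintro ⟨a, hba, ha⟩
    refine ⟨hΦ.zero x ▸ ha 0 ⟨le_rfl, by linarith⟩, ?_⟩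
    refine ((ENNReal.ofReal_lt_ofReal_iff (by linarith)).2 hba).trans_le ?_
    exact ofReal_le_tauPlus_iff.2 fun s hs hsa => ha s ⟨hs.le, hsa.le⟩

theorem measurableSet_setOf_tauPlus_lt_top (hΦ : IsFlowOf F Φ) (hF : LipschitzWith κ F)
    (hΩ : IsOpen Ω) : MeasurableSet {x ∈ Ω | tauPlus Ω Φ x < ∞} := by
  have : {x ∈ Ω | tauPlus Ω Φ x < ∞} =
      ⋃ n : ℕ, Ω \ {x ∈ Ω | ENNReal.ofReal n < tauPlus Ω Φ x} := by
    ext x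
    simp only [Set.mem_iUnion, Set.mem_sdiff, Set.mem_sep_iff, not_and, not_lt]
    constructor
    · rintro ⟨hx, hτ⟩
      obtain ⟨n, hn⟩ := ENNReal.exists_nat_gt hτ.ne
      exact ⟨n, hx, fun _ => ENNReal.ofReal_natCast n ▸ hn.le⟩
    · rintro ⟨n, hx, hn⟩
      exact ⟨hx, (hn hx).trans_lt ENNReal.ofReal_lt_top⟩
  rw [this]
  exact .iUnion fun n =>
    hΩ.measurableSet.diff (isOpen_setOf_lt_tauPlus hΦ hF hΩ n.cast_nonneg).measurableSet

namespace IsFlowOf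

variable {x : Euc N} {t : ℝ}

theorem ofReal_le_tauPlus_flow_neg (hΦ : IsFlowOf F Φ) (hF : LipschitzWith κ F)
    (ht : ENNReal.ofReal t < tauMinus Ω Φ x) : ENNReal.ofReal t ≤ tauPlus Ω Φ (Φ x (-t)) := by
  refine ofReal_le_tauPlus_iff.2 fun s hs hst => ?_
  rw [← hΦ.add hF x (-t) hs.le, show -t + s = -(t - s) by ring]
  exact mem_of_lt_tauMinus ht (by linarith) (by linarith)

theorem tauPlus_flow_neg_lt_top (hΦ : IsFlowOf F Φ) (hF : LipschitzWith κ F) (ht : 0 ≤ t)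
    (hx : tauPlus Ω Φ x < ∞) : tauPlus Ω Φ (Φ x (-t)) < ∞ := by
  obtain ⟨s, hs, hsΩ⟩ := tauPlus_lt_top_iff.1 hx
  refine tauPlus_lt_top_iff.2 ⟨t + s, by linarith, ?_⟩
  rwa [← hΦ.add hF x (-t) (by linarith), neg_add_cancel_left]

theorem ae_comp_flow_neg_of_ae_lt_tauPlus (hΦ : IsFlowOf F Φ) (hF : LipschitzWith κ F)
    (hΩ : IsOpen Ω) {P : Euc N → Prop} {m : ℝ} (ht : 0 < t) (hmt : m < t)
    (hP : ∀ᵐ y ∂volume.restrict {y ∈ Ω | tauPlus Ω Φ y < ∞},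
      ENNReal.ofReal m < tauPlus Ω Φ y → P y) :
    ∀ᵐ x ∂volume.restrict {x ∈ Ω | tauPlus Ω Φ x < ∞},
      ENNReal.ofReal t < tauMinus Ω Φ x → P (Φ x (-t)) := by
  have hΩ₁ := measurableSet_setOf_tauPlus_lt_top hΦ hF hΩ
  set D := {y | ¬(y ∈ {y ∈ Ω | tauPlus Ω Φ y < ∞} → ENNReal.ofReal m < tauPlus Ω Φ y → P y)}
  have hD : volume D = 0 := ae_iff.1 ((ae_restrict_iff' hΩ₁).1 hP)
  have himage : volume ((Φ · t) '' D) = 0 := by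
    refine le_antisymm ?_ zero_le
    exact (hΦ.lipschitzWith hF ht.le).lipschitzOnWith.volume_image_le.trans (by rw [hD, mul_zero])
  filter_upwards [ae_restrict_mem hΩ₁,
    ae_restrict_of_ae (measure_eq_zero_iff_ae_notMem.1 himage)] with x hx hxD hxt
  by_contra hPx
  refine hxD ⟨Φ x (-t), fun h => hPx (h ⟨?_, ?_⟩ ?_), ?_⟩
  · exact mem_of_lt_tauMinus hxt ht le_rfl
  · exact hΦ.tauPlus_flow_neg_lt_top hF ht.le hx.2
  · exact ((ENNReal.ofReal_lt_ofReal_iff ht).2 hmt).trans_le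
      (hΦ.ofReal_le_tauPlus_flow_neg hF hxt)
  · change Φ (Φ x (-t)) t = x
    rw [← hΦ.add hF x (-t) ht.le, neg_add_cancel, hΦ.zero]

end IsFlowOf

theorem Lp.dense_setOf_ae_eq_zero_on_lt_tauPlus {E : Type*} [NormedAddCommGroup E]
    {p : ℝ≥0∞} [Fact (1 ≤ p)] (hp : p ≠ ∞) (hΦ : IsFlowOf F Φ) (hF : LipschitzWith κ F)
    (hΩ : IsOpen Ω) :
    Dense {f : Lp E p (volume.restrict {x ∈ Ω | tauPlus Ω Φ x < ∞}) | ∃ m : ℕ, 1 ≤ m ∧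
      ∀ᵐ x ∂(volume.restrict {x ∈ Ω | tauPlus Ω Φ x < ∞}),
        ENNReal.ofReal (m : ℝ) < tauPlus Ω Φ x → f x = 0} := by
  have hΩ₁ := measurableSet_setOf_tauPlus_lt_top hΦ hF hΩ
  refine Dense.mono ?_ (Lp.dense_setOf_ae_eq_zero_on hp
    (s := fun n => {x ∈ Ω | ENNReal.ofReal ((n + 1 : ℕ) : ℝ) < tauPlus Ω Φ x})
    (fun n => (isOpen_setOf_lt_tauPlus hΦ hF hΩ (Nat.cast_nonneg _)).measurableSet) ?_)
  · rintro f ⟨n, hf⟩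
    refine ⟨n + 1, by omega, ?_⟩
    filter_upwards [hf, ae_restrict_mem hΩ₁] with x hfx hx hτ using hfx ⟨hx.1, hτ⟩
  · filter_upwards [ae_restrict_mem hΩ₁] with x hx
    obtain ⟨n, hn⟩ := ENNReal.exists_nat_gt hx.2.ne
    filter_upwards [eventually_ge_atTop n] with k hk hkΩ₁
    have hkτ := hkΩ₁.2
    rw [ENNReal.ofReal_natCast] at hkτ
    exact (hkτ.trans hn).not_ge (by exact_mod_cast hk.trans k.le_succ)

end FlowExitTime

theorem U1_local_quasinilpotence_general
    {N : ℕ} (Ω : Set (Euc N)) (hΩ : IsOpen Ω)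
    -- `F` is globally Lipschitz with constant `κ > 0`, with divergence bounded on `Ω`
    (F : Euc N → Euc N) (κ : ℝ≥0) (hF : LipschitzWith κ F)
    -- `Φ` is the global flow of `F`
    (Φ : Euc N → ℝ → Euc N) (hΦ₀ : ∀ x, Φ x 0 = x)
    (hΦ : ∀ x t, HasDerivAt (Φ x) (F (Φ x t)) t)
    -- `ν = h + div F`
    (ν : Euc N → ℝ)
    -- the exponent `1 ≤ p < ∞`
    (p : ℝ≥0∞) [Fact (1 ≤ p)] (hp : p ≠ ∞)
    (Ω₁ : Set (Euc N)) (hΩ₁ : Ω₁ = {x ∈ Ω | tauPlus Ω Φ x < ∞})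
    -- the restriction `U₁(t)` of `U(t)` to `X₁ ≃ L^p(Ω₁)` (real valued)
    (U₁ : ℝ → (Lp ℝ p (volume.restrict Ω₁) →L[ℝ] Lp ℝ p (volume.restrict Ω₁)))
    (hU₁ : ∀ t, 0 ≤ t → ∀ f : Lp ℝ p (volume.restrict Ω₁),
      ⇑(U₁ t f) =ᵐ[volume.restrict Ω₁] fun x =>
        if ENNReal.ofReal t < tauMinus Ω Φ x then
          Real.exp (-∫ s in (0:ℝ)..t, ν (Φ x (-s))) * f (Φ x (-t))
        else 0) :
    -- vanishing of `U₁(t)f` for `t > m`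
    (∀ m : ℕ, 1 ≤ m → ∀ f : Lp ℝ p (volume.restrict Ω₁),
      (∀ᵐ x ∂(volume.restrict Ω₁), ENNReal.ofReal (m : ℝ) < tauPlus Ω Φ x → f x = 0) →
      ∀ t : ℝ, (m : ℝ) < t → U₁ t f = 0) ∧
    -- density
    Dense {f : Lp ℝ p (volume.restrict Ω₁) | ∃ m : ℕ, 1 ≤ m ∧
      ∀ᵐ x ∂(volume.restrict Ω₁), ENNReal.ofReal (m : ℝ) < tauPlus Ω Φ x → f x = 0} ∧
    -- local quasinilpotence on this set
    (∀ f : Lp ℝ p (volume.restrict Ω₁), (∃ m : ℕ, 1 ≤ m ∧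
        (∀ᵐ x ∂(volume.restrict Ω₁), ENNReal.ofReal (m : ℝ) < tauPlus Ω Φ x → f x = 0)) →
      Tendsto (fun t : ℝ => ‖U₁ t |f|‖ ^ t⁻¹) atTop (nhds 0)) := by
  subst hΩ₁
  have hflow : IsFlowOf F Φ := ⟨hΦ₀, hΦ⟩
  have hvanish : ∀ m : ℕ, 1 ≤ m → ∀ f : Lp ℝ p (volume.restrict {x ∈ Ω | tauPlus Ω Φ x < ∞}),
      (∀ᵐ x ∂(volume.restrict {x ∈ Ω | tauPlus Ω Φ x < ∞}),
        ENNReal.ofReal (m : ℝ) < tauPlus Ω Φ x → f x = 0) →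
      ∀ t : ℝ, (m : ℝ) < t → U₁ t f = 0 := by
    intro m hm f hf t hmt
    have ht : 0 < t := (Nat.cast_pos.2 hm).trans hmt
    refine Lp.ext ?_
    filter_upwards [hU₁ t ht.le f, hflow.ae_comp_flow_neg_of_ae_lt_tauPlus hF hΩ ht hmt hf,
      Lp.coeFn_zero ℝ p _] with x hUx hfx h0
    rw [hUx, h0]
    split_ifs with hxt
    · rw [hfx hxt, mul_zero, Pi.zero_apply]
    · rfl
  refine ⟨hvanish, Lp.dense_setOf_ae_eq_zero_on_lt_tauPlus hp hflow hF hΩ, ?_⟩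
  rintro f ⟨m, hm, hf⟩
  have habs : ∀ᵐ x ∂(volume.restrict {x ∈ Ω | tauPlus Ω Φ x < ∞}),
      ENNReal.ofReal (m : ℝ) < tauPlus Ω Φ x → |f| x = 0 := by
    filter_upwards [hf, Lp.coeFn_abs f] with x hx habs hτ
    rw [habs, hx hτ, abs_zero]
  refine tendsto_const_nhds.congr' ?_
  filter_upwards [eventually_gt_atTop (m : ℝ)] with t ht
  rw [hvanish m hm |f| habs t ht, norm_zero,
    Real.zero_rpow (inv_ne_zero (m.cast_nonneg.trans_lt ht).ne')]

/-- If `f ∈ X₁` vanishes a.e. on `{τ₊ > m}` then `U₁(t)f = 0` for every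
`t > m`; consequently the set of all such functions (over all `m ≥ 1`) is dense in `X₁`,
and on it the semigroup is locally quasinilpotent:
`‖U₁(t)|f|‖^{1/t} → 0` as `t → ∞`. -/
theorem U1_local_quasinilpotence
    {N : ℕ} (Ω : Set (Euc N)) (hΩ : IsOpen Ω)
    -- `F` is globally Lipschitz with constant `κ > 0`, with divergence bounded on `Ω`
    (F : Euc N → Euc N) (κ : ℝ≥0) (hκ : 0 < κ) (hF : LipschitzWith κ F)
    (hdivb : ∃ C, ∀ x ∈ Ω, |diverg F x| ≤ C)
    -- `h` is measurable and bounded below on `Ω`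
    (h : Euc N → ℝ) (hh : Measurable h) (hhb : ∃ c, ∀ x ∈ Ω, c ≤ h x)
    -- `Φ` is the global flow of `F`
    (Φ : Euc N → ℝ → Euc N) (hΦ₀ : ∀ x, Φ x 0 = x)
    (hΦ : ∀ x t, HasDerivAt (Φ x) (F (Φ x t)) t)
    -- `ν = h + div F`
    (ν : Euc N → ℝ) (hν : ν = fun x => h x + diverg F x)
    -- the exponent `1 ≤ p < ∞`
    (p : ℝ≥0∞) [Fact (1 ≤ p)] (hp : p ≠ ∞)
    (Ω₁ : Set (Euc N)) (hΩ₁ : Ω₁ = {x ∈ Ω | tauPlus Ω Φ x < ∞})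
    -- the restriction `U₁(t)` of `U(t)` to `X₁ ≃ L^p(Ω₁)` (real valued)
    (U₁ : ℝ → (Lp ℝ p (volume.restrict Ω₁) →L[ℝ] Lp ℝ p (volume.restrict Ω₁)))
    (hU₁ : ∀ t, 0 ≤ t → ∀ f : Lp ℝ p (volume.restrict Ω₁),
      ⇑(U₁ t f) =ᵐ[volume.restrict Ω₁] fun x =>
        if ENNReal.ofReal t < tauMinus Ω Φ x then
          Real.exp (-∫ s in (0:ℝ)..t, ν (Φ x (-s))) * f (Φ x (-t))
        else 0) :
    -- vanishing of `U₁(t)f` for `t > m`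
    (∀ m : ℕ, 1 ≤ m → ∀ f : Lp ℝ p (volume.restrict Ω₁),
      (∀ᵐ x ∂(volume.restrict Ω₁), ENNReal.ofReal (m : ℝ) < tauPlus Ω Φ x → f x = 0) →
      ∀ t : ℝ, (m : ℝ) < t → U₁ t f = 0) ∧
    -- density
    Dense {f : Lp ℝ p (volume.restrict Ω₁) | ∃ m : ℕ, 1 ≤ m ∧
      ∀ᵐ x ∂(volume.restrict Ω₁), ENNReal.ofReal (m : ℝ) < tauPlus Ω Φ x → f x = 0} ∧
    -- local quasinilpotence on this set
    (∀ f : Lp ℝ p (volume.restrict Ω₁), (∃ m : ℕ, 1 ≤ m ∧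
        (∀ᵐ x ∂(volume.restrict Ω₁), ENNReal.ofReal (m : ℝ) < tauPlus Ω Φ x → f x = 0)) →
      Tendsto (fun t : ℝ => ‖U₁ t |f|‖ ^ t⁻¹) atTop (nhds 0)) :=
  U1_local_quasinilpotence_general Ω hΩ F κ hF Φ hΦ₀ hΦ ν p hp Ω₁ hΩ₁ U₁ hU₁
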